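/- arXiv:1412.4438 — 6 statements merged into one kernel-verified Lean document; each statement's English description precedes it below -/
import Mathlib

section
/- (Opial κ-averaged theorem) Let C be a nonempty closed convex subset of ℝ^d and let P : C → C be a nonexpansive mapping that has at least one fixed point. Fix κ ∈ (0,1) and set P_κ = κ·I + (1−κ)·P. Then for every initial point v⁰ ∈ C, the Picard sequence defined by v^{k+1} = P_κ(v^k) converges to some fixed point of P. -/
open Filter Topology

/-! The averaged map `T = κ I + (1 - κ) P` decreases the squared distance to any fixed point `z`
of `P` by at least `κ (1 - κ) ‖x - P x‖²`. Hence `‖v k - z‖` is nonincreasing for every fixed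
point `z` (Fejér monotonicity), the residuals `v k - P (v k)` tend to `0`, and by compactness
some subsequence converges to a point `w`, which is a fixed point of `P` by continuity.
Fejér monotonicity with respect to `w` then upgrades subsequential convergence to convergence. -/

theorem tendsto_zero_of_le_sub_mul {a b : ℕ → ℝ} {c : ℝ} (hc : 0 < c) (ha : ∀ k, 0 ≤ a k)
    (hb : ∀ k, 0 ≤ b k) (hab : ∀ k, a (k + 1) ≤ a k - c * b k) :
    Tendsto b atTop (𝓝 0) := by
  have hanti : Antitone a :=
    antitone_nat_of_succ_le fun k => (hab k).trans (sub_le_self _ (mul_nonneg hc.le (hb k)))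
  have hlim : Tendsto a atTop (𝓝 (⨅ k, a k)) :=
    tendsto_atTop_ciInf hanti ⟨0, by rintro _ ⟨k, rfl⟩; exact ha k⟩
  have hdrop : Tendsto (fun k => (a k - a (k + 1)) / c) atTop (𝓝 0) := by
    simpa using (hlim.sub (hlim.comp (tendsto_add_atTop_nat 1))).div_const c
  refine squeeze_zero hb (fun k => ?_) hdrop
  rw [le_div_iff₀ hc]
  linarith [hab k]

section InnerProductSpace

variable {E : Type*} [NormedAddCommGroup E] [InnerProductSpace ℝ E]

theorem norm_smul_add_one_sub_smul_sq (κ : ℝ) (a b : E) :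
    ‖κ • a + (1 - κ) • b‖ ^ 2
      = κ * ‖a‖ ^ 2 + (1 - κ) * ‖b‖ ^ 2 - κ * (1 - κ) * ‖a - b‖ ^ 2 := by
  simp only [← real_inner_self_eq_norm_sq, inner_add_add_self, inner_sub_sub_self,
    real_inner_smul_left, real_inner_smul_right]
  ring

theorem norm_smul_add_one_sub_smul_sq_le {κ : ℝ} (hκ : κ ≤ 1) {a b : E} (hab : ‖b‖ ≤ ‖a‖) :
    ‖κ • a + (1 - κ) • b‖ ^ 2 ≤ ‖a‖ ^ 2 - κ * (1 - κ) * ‖a - b‖ ^ 2 := by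
  have hsq : (1 - κ) * ‖b‖ ^ 2 ≤ (1 - κ) * ‖a‖ ^ 2 :=
    mul_le_mul_of_nonneg_left (pow_le_pow_left₀ (norm_nonneg b) hab 2) (sub_nonneg.2 hκ)
  rw [norm_smul_add_one_sub_smul_sq]
  linarith

variable {P : E → E} {κ : ℝ} {x z : E}

theorem norm_averaged_sub_sq_le (hκ : κ ≤ 1) (hPz : P z = z) (hx : ‖P x - P z‖ ≤ ‖x - z‖) :
    ‖κ • x + (1 - κ) • P x - z‖ ^ 2 ≤ ‖x - z‖ ^ 2 - κ * (1 - κ) * ‖x - P x‖ ^ 2 := by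
  have hsplit : κ • x + (1 - κ) • P x - z = κ • (x - z) + (1 - κ) • (P x - z) := by module
  rw [hsplit, ← sub_sub_sub_cancel_right x (P x) z]
  rw [hPz] at hx
  exact norm_smul_add_one_sub_smul_sq_le hκ hx

theorem norm_averaged_sub_le (hκ₀ : 0 ≤ κ) (hκ₁ : κ ≤ 1) (hPz : P z = z)
    (hx : ‖P x - P z‖ ≤ ‖x - z‖) : ‖κ • x + (1 - κ) • P x - z‖ ≤ ‖x - z‖ := by
  have hdecay : 0 ≤ κ * (1 - κ) * ‖x - P x‖ ^ 2 := by
    have := sub_nonneg.2 hκ₁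
    positivity
  refine (pow_le_pow_iff_left₀ (norm_nonneg _) (norm_nonneg _) two_ne_zero).1 ?_
  linarith [norm_averaged_sub_sq_le hκ₁ hPz hx]

end InnerProductSpace

theorem Convex.averaged_iterate_mem {E : Type*} [AddCommGroup E] [Module ℝ E] {C : Set E}
    (hC : Convex ℝ C) {P : E → E} (hP : Set.MapsTo P C C) {κ : ℝ} (hκ₀ : 0 ≤ κ) (hκ₁ : κ ≤ 1)
    {v : ℕ → E} (hv0 : v 0 ∈ C) (hrec : ∀ k, v (k + 1) = κ • v k + (1 - κ) • P (v k)) :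
    ∀ k, v k ∈ C
  | 0 => hv0
  | k + 1 => by
    rw [hrec k]
    have hk := hC.averaged_iterate_mem hP hκ₀ hκ₁ hv0 hrec k
    exact hC hk (hP hk) hκ₀ (sub_nonneg.2 hκ₁) (add_sub_cancel κ 1)

theorem fixedPoint_of_tendsto_sub_tendsto_zero {E : Type*} [NormedAddCommGroup E] {C : Set E}
    (hC : IsClosed C) {P : E → E} (hP : ContinuousOn P C) {u : ℕ → E} (huC : ∀ k, u k ∈ C)
    {w : E} (hu : Tendsto u atTop (𝓝 w)) (hres : Tendsto (fun k => u k - P (u k)) atTop (𝓝 0)) :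
    w ∈ C ∧ P w = w := by
  have hwC : w ∈ C := hC.mem_of_tendsto hu (Eventually.of_forall huC)
  have hPu : Tendsto (fun k => P (u k)) atTop (𝓝 (P w)) :=
    (hP w hwC).tendsto.comp (tendsto_nhdsWithin_iff.2 ⟨hu, Eventually.of_forall huC⟩)
  have hPu' : Tendsto (fun k => P (u k)) atTop (𝓝 w) := by
    simpa using hu.sub hres
  exact ⟨hwC, tendsto_nhds_unique hPu hPu'⟩

theorem opial_kappa_averaged_general (d : ℕ) (C : Set (EuclideanSpace ℝ (Fin d)))
    (hCclosed : IsClosed C) (hCconv : Convex ℝ C)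
    (P : EuclideanSpace ℝ (Fin d) → EuclideanSpace ℝ (Fin d))
    (hPmaps : Set.MapsTo P C C)
    (hPne : ∀ x ∈ C, ∀ y ∈ C, ‖P x - P y‖ ≤ ‖x - y‖)
    (hPfix : ∃ z ∈ C, P z = z)
    (κ : ℝ) (hκ : κ ∈ Set.Ioo (0 : ℝ) 1)
    (v : ℕ → EuclideanSpace ℝ (Fin d)) (hv0 : v 0 ∈ C)
    (hrec : ∀ k, v (k + 1) = κ • v k + (1 - κ) • P (v k)) :
    ∃ w ∈ C, P w = w ∧ Tendsto v atTop (𝓝 w) := by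
  obtain ⟨hκ₀, hκ₁⟩ := hκ
  obtain ⟨z, hzC, hPz⟩ := hPfix
  have hmem := hCconv.averaged_iterate_mem hPmaps hκ₀.le hκ₁.le hv0 hrec
  have hfejer : ∀ y ∈ C, P y = y → Antitone fun k => dist (v k) y := fun y hy hPy =>
    antitone_nat_of_succ_le fun k => by
      simpa only [hrec, dist_eq_norm] using
        norm_averaged_sub_le hκ₀.le hκ₁.le hPy (hPne _ (hmem k) y hy)
  have hres : Tendsto (fun k => v k - P (v k)) atTop (𝓝 0) := by
    have hsq := tendsto_zero_of_le_sub_mul (mul_pos hκ₀ (sub_pos.2 hκ₁))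
      (fun k => sq_nonneg ‖v k - z‖) (fun k => sq_nonneg ‖v k - P (v k)‖)
      fun k => by simpa only [hrec] using norm_averaged_sub_sq_le hκ₁.le hPz (hPne _ (hmem k) z hzC)
    rw [tendsto_zero_iff_norm_tendsto_zero]
    simpa [Real.sqrt_sq (norm_nonneg _)] using hsq.sqrt
  obtain ⟨w, -, φ, hφ, hφw⟩ := tendsto_subseq_of_bounded Metric.isBounded_closedBall
    fun k => Metric.mem_closedBall.2 (hfejer z hzC hPz (Nat.zero_le k))
  have hPcont : ContinuousOn P C :=
    (LipschitzOnWith.of_dist_le' (K := 1) fun x hx y hy => by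
      simpa only [dist_eq_norm, one_mul] using hPne x hx y hy).continuousOn
  obtain ⟨hwC, hPw⟩ := fixedPoint_of_tendsto_sub_tendsto_zero hCclosed hPcont
    (fun k => hmem (φ k)) hφw (hres.comp hφ.tendsto_atTop)
  refine ⟨w, hwC, hPw, tendsto_iff_dist_tendsto_zero.2 ?_⟩
  exact (tendsto_iff_tendsto_subseq_of_antitone (hfejer w hwC hPw) hφ.tendsto_atTop).2
    (tendsto_iff_dist_tendsto_zero.1 hφw)

/-- (Opial κ-averaged theorem) Let `C ⊆ ℝ^d` be nonempty, closed and convex, and let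
`P : C → C` be nonexpansive with at least one fixed point. For `κ ∈ (0,1)` the Picard
sequence of `P_κ = κ·I + (1−κ)·P` converges to a fixed point of `P`. -/
theorem opial_kappa_averaged (d : ℕ) (C : Set (EuclideanSpace ℝ (Fin d)))
    (hCne : C.Nonempty) (hCclosed : IsClosed C) (hCconv : Convex ℝ C)
    (P : EuclideanSpace ℝ (Fin d) → EuclideanSpace ℝ (Fin d))
    (hPmaps : Set.MapsTo P C C)
    (hPne : ∀ x ∈ C, ∀ y ∈ C, ‖P x - P y‖ ≤ ‖x - y‖)
    (hPfix : ∃ z ∈ C, P z = z)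
    (κ : ℝ) (hκ : κ ∈ Set.Ioo (0 : ℝ) 1)
    (v : ℕ → EuclideanSpace ℝ (Fin d)) (hv0 : v 0 ∈ C)
    (hrec : ∀ k, v (k + 1) = κ • v k + (1 - κ) • P (v k)) :
    ∃ w ∈ C, P w = w ∧ Tendsto v atTop (𝓝 w) :=
  opial_kappa_averaged_general d C hCclosed hCconv P hPmaps hPne hPfix κ hκ v hv0 hrec
end

section
/- Let f₁ : ℝ^M → ℝ be convex, B : ℝ^N → ℝ^M linear with adjoint Bᵀ, x ∈ ℝ^N, and let λ satisfy 0 < λ < 2/λ_max(BBᵀ), where λ_max(BBᵀ) is the largest eigenvalue of BBᵀ. Define S(v) = (I − prox_{(1/λ)f₁})(Bx + (I − λBBᵀ)v) for v ∈ ℝ^M. If v* ∈ ℝ^M satisfies v* = S(v*), then prox_{f₁∘B}(x) = x − λBᵀv*, i.e. x − λBᵀv* is the unique minimizer over u ∈ ℝ^N of f₁(Bu) + (1/2)‖u − x‖². -/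
/-!
The fixed-point equation says exactly that `p := B (x − λBᵀv*)` is the proximal point of
`f₁/λ` at `w := Bx + (I − λBBᵀ)v*`, with `w − p = v*`. By the variational inequality of the
proximal map, `λv*` is then a subgradient of `f₁` at `p`, so `λBᵀv* = x − u₀` is a subgradient
of `f₁ ∘ B` at `u₀ := x − λBᵀv*`. This is the optimality condition of the 1-strongly convex
objective `f₁(Bu) + ½‖u − x‖²`, which therefore grows at least like `½‖u − u₀‖²` away from `u₀`.
-/

open scoped RealInnerProductSpace
open Filter Topology Set

variable {E : Type*} [NormedAddCommGroup E] [InnerProductSpace ℝ E]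

def HasSubgradientAt (f : E → ℝ) (s x : E) : Prop :=
  ∀ z, f x + ⟪s, z - x⟫ ≤ f z

def IsProxPoint (c : ℝ) (f : E → ℝ) (w p : E) : Prop :=
  ∀ z, c * f p + 1 / 2 * ‖p - w‖ ^ 2 ≤ c * f z + 1 / 2 * ‖z - w‖ ^ 2

lemma nonneg_of_forall_pos_le_one_add_mul {a c : ℝ}
    (h : ∀ t : ℝ, 0 < t → t ≤ 1 → 0 ≤ a + t * c) : 0 ≤ a := by
  have hlim : Tendsto (fun t : ℝ => a + t * c) (𝓝[>] 0) (𝓝 a) := by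
    have : Tendsto (fun t : ℝ => a + t * c) (𝓝 0) (𝓝 (a + 0 * c)) :=
      (continuous_const.add (continuous_id.mul continuous_const)).tendsto 0
    simpa using this.mono_left nhdsWithin_le_nhds
  refine ge_of_tendsto hlim ?_
  filter_upwards [Ioc_mem_nhdsGT zero_lt_one] with t ht using h t ht.1 ht.2

theorem ConvexOn.hasSubgradientAt_of_isProxPoint {f : E → ℝ} (hf : ConvexOn ℝ univ f)
    {c : ℝ} (hc : 0 < c) {w p : E} (hp : IsProxPoint c f w p) :
    HasSubgradientAt f (c⁻¹ • (w - p)) p := by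
  intro z
  -- compare `p` with the points `p + t • (z - p)` of the segment towards `z`, then let `t → 0⁺`
  suffices h : 0 ≤ c * (f z - f p) - ⟪w - p, z - p⟫ by
    rw [inner_smul_left, RCLike.conj_to_real]
    have : c⁻¹ * ⟪w - p, z - p⟫ ≤ f z - f p := by
      rw [inv_mul_le_iff₀ hc]; linarith
    linarith
  refine nonneg_of_forall_pos_le_one_add_mul (c := ‖z - p‖ ^ 2 / 2) fun t ht ht1 => ?_
  have hconv : f (p + t • (z - p)) ≤ (1 - t) * f p + t * f z := by
    have := hf.2 (mem_univ p) (mem_univ z) (sub_nonneg.2 ht1) ht.le (by ring)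
    rwa [show (1 - t) • p + t • z = p + t • (z - p) by module, smul_eq_mul, smul_eq_mul] at this
  have hnorm : ‖p + t • (z - p) - w‖ ^ 2
      = ‖p - w‖ ^ 2 - 2 * t * ⟪w - p, z - p⟫ + t ^ 2 * ‖z - p‖ ^ 2 := by
    rw [show p + t • (z - p) - w = (p - w) + t • (z - p) by abel, norm_add_sq_real,
      inner_smul_right, norm_smul, Real.norm_eq_abs, mul_pow, sq_abs,
      ← neg_sub w p, inner_neg_left]
    ring
  have hmin := hp (p + t • (z - p))
  rw [hnorm] at hmin
  have hscaled : 0 ≤ t * (c * (f z - f p) - ⟪w - p, z - p⟫ + t * (‖z - p‖ ^ 2 / 2)) := by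
    nlinarith [mul_le_mul_of_nonneg_left hconv hc.le]
  exact nonneg_of_mul_nonneg_right (by linarith) ht

theorem HasSubgradientAt.comp_continuousLinearMap {F : Type*} [NormedAddCommGroup F]
    [InnerProductSpace ℝ F] {f : F → ℝ} {s : F} {B : E →L[ℝ] F}
    {Badj : F →L[ℝ] E} (hadj : ∀ x y, ⟪B x, y⟫ = ⟪x, Badj y⟫) {u : E}
    (hf : HasSubgradientAt f s (B u)) : HasSubgradientAt (fun v => f (B v)) (Badj s) u := by
  intro z
  rw [real_inner_comm, ← hadj, real_inner_comm, map_sub]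
  exact hf (B z)

theorem HasSubgradientAt.add_half_sq_le {g : E → ℝ} {x u₀ : E}
    (hg : HasSubgradientAt g (x - u₀) u₀) (u : E) :
    g u₀ + 1 / 2 * ‖u₀ - x‖ ^ 2 + 1 / 2 * ‖u - u₀‖ ^ 2 ≤ g u + 1 / 2 * ‖u - x‖ ^ 2 := by
  have hsplit := norm_add_sq_real (u - u₀) (u₀ - x)
  rw [show u - u₀ + (u₀ - x) = u - x by abel, ← neg_sub x u₀, inner_neg_right,
    real_inner_comm, norm_neg, norm_sub_rev x u₀] at hsplit
  linarith [hg u]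

theorem isMin_and_unique_of_add_half_sq_le {G : Type*} [NormedAddCommGroup G] {φ : G → ℝ}
    {u₀ : G} (h : ∀ u, φ u₀ + 1 / 2 * ‖u - u₀‖ ^ 2 ≤ φ u) :
    (∀ u, φ u₀ ≤ φ u) ∧ ∀ u, (∀ z, φ u ≤ φ z) → u = u₀ := by
  refine ⟨fun u => by nlinarith [h u, sq_nonneg ‖u - u₀‖], fun u hu => ?_⟩
  have hsq : ‖u - u₀‖ ^ 2 ≤ 0 := by linarith [h u, hu u₀]
  rw [← sub_eq_zero, ← norm_eq_zero]
  exact pow_eq_zero_iff two_ne_zero |>.1 (le_antisymm hsq (sq_nonneg _))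

theorem fp2o_fixed_point_gives_prox_general (N M : ℕ)
    (f₁ : EuclideanSpace ℝ (Fin M) → ℝ) (hf₁ : ConvexOn ℝ Set.univ f₁)
    (B : EuclideanSpace ℝ (Fin N) →L[ℝ] EuclideanSpace ℝ (Fin M))
    (Badj : EuclideanSpace ℝ (Fin M) →L[ℝ] EuclideanSpace ℝ (Fin N))
    (hadj : ∀ (x : EuclideanSpace ℝ (Fin N)) (y : EuclideanSpace ℝ (Fin M)),
      ⟪B x, y⟫ = ⟪x, Badj y⟫)
    (x : EuclideanSpace ℝ (Fin N))
    (lam : ℝ) (hlam : 0 < lam)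
    (prox : EuclideanSpace ℝ (Fin M) → EuclideanSpace ℝ (Fin M))
    (hprox : ∀ w p, prox w = p ↔
      ∀ z : EuclideanSpace ℝ (Fin M),
        (1 / lam) * f₁ p + (1 / 2) * ‖p - w‖ ^ 2 ≤ (1 / lam) * f₁ z + (1 / 2) * ‖z - w‖ ^ 2)
    (S : EuclideanSpace ℝ (Fin M) → EuclideanSpace ℝ (Fin M))
    (hS : ∀ v, S v = (B x + (v - lam • B (Badj v))) - prox (B x + (v - lam • B (Badj v))))
    (vs : EuclideanSpace ℝ (Fin M)) (hfix : vs = S vs) :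
    (∀ u : EuclideanSpace ℝ (Fin N),
        f₁ (B (x - lam • Badj vs)) + (1 / 2) * ‖(x - lam • Badj vs) - x‖ ^ 2
          ≤ f₁ (B u) + (1 / 2) * ‖u - x‖ ^ 2) ∧
    (∀ u : EuclideanSpace ℝ (Fin N),
        (∀ z : EuclideanSpace ℝ (Fin N),
          f₁ (B u) + (1 / 2) * ‖u - x‖ ^ 2 ≤ f₁ (B z) + (1 / 2) * ‖z - x‖ ^ 2) →
        u = x - lam • Badj vs) := by
  set u₀ := x - lam • Badj vs
  set w := B x + (vs - lam • B (Badj vs))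
  have hw : w - B u₀ = vs := by simp only [u₀, w, map_sub, map_smul]; abel
  have hproxw : prox w = B u₀ := by
    rw [hS vs] at hfix
    change vs = w - prox w at hfix
    rw [← sub_sub_cancel w (B u₀), hw, hfix]; abel
  have hsub : HasSubgradientAt f₁ (lam • vs) (B u₀) := by
    simpa [hw, hlam.ne'] using
      hf₁.hasSubgradientAt_of_isProxPoint (one_div_pos.2 hlam) ((hprox w _).1 hproxw)
  have hcomp : HasSubgradientAt (fun u => f₁ (B u)) (x - u₀) u₀ := by
    simpa [u₀] using hsub.comp_continuousLinearMap hadj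
  exact isMin_and_unique_of_add_half_sq_le (φ := fun u => f₁ (B u) + 1 / 2 * ‖u - x‖ ^ 2)
    fun u => by linarith [hcomp.add_half_sq_le u]

/-- (FP²O) Let `f₁ : ℝ^M → ℝ` be convex, `B : ℝ^N → ℝ^M` linear with adjoint `Bᵀ`,
`x ∈ ℝ^N` and `0 < λ < 2/λ_max(BBᵀ)`. If `v* = S(v*)` where
`S(v) = (I − prox_{(1/λ)f₁})(Bx + (I − λBBᵀ)v)`, then `x − λBᵀv*` is the unique
minimizer of `u ↦ f₁(Bu) + (1/2)‖u − x‖²`, i.e. `prox_{f₁∘B}(x) = x − λBᵀv*`. -/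
theorem fp2o_fixed_point_gives_prox (N M : ℕ)
    (f₁ : EuclideanSpace ℝ (Fin M) → ℝ) (hf₁ : ConvexOn ℝ Set.univ f₁)
    (B : EuclideanSpace ℝ (Fin N) →L[ℝ] EuclideanSpace ℝ (Fin M))
    (Badj : EuclideanSpace ℝ (Fin M) →L[ℝ] EuclideanSpace ℝ (Fin N))
    (hadj : ∀ (x : EuclideanSpace ℝ (Fin N)) (y : EuclideanSpace ℝ (Fin M)),
      ⟪B x, y⟫ = ⟪x, Badj y⟫)
    (x : EuclideanSpace ℝ (Fin N))
    (lmax : ℝ)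
    (hlmax : IsGreatest {μ : ℝ | Module.End.HasEigenvalue ((B.comp Badj).toLinearMap) μ} lmax)
    (lam : ℝ) (hlam : 0 < lam) (hlam2 : lam < 2 / lmax)
    (prox : EuclideanSpace ℝ (Fin M) → EuclideanSpace ℝ (Fin M))
    (hprox : ∀ w p, prox w = p ↔
      ∀ z : EuclideanSpace ℝ (Fin M),
        (1 / lam) * f₁ p + (1 / 2) * ‖p - w‖ ^ 2 ≤ (1 / lam) * f₁ z + (1 / 2) * ‖z - w‖ ^ 2)
    (S : EuclideanSpace ℝ (Fin M) → EuclideanSpace ℝ (Fin M))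
    (hS : ∀ v, S v = (B x + (v - lam • B (Badj v))) - prox (B x + (v - lam • B (Badj v))))
    (vs : EuclideanSpace ℝ (Fin M)) (hfix : vs = S vs) :
    (∀ u : EuclideanSpace ℝ (Fin N),
        f₁ (B (x - lam • Badj vs)) + (1 / 2) * ‖(x - lam • Badj vs) - x‖ ^ 2
          ≤ f₁ (B u) + (1 / 2) * ‖u - x‖ ^ 2) ∧
    (∀ u : EuclideanSpace ℝ (Fin N),
        (∀ z : EuclideanSpace ℝ (Fin N),
          f₁ (B u) + (1 / 2) * ‖u - x‖ ^ 2 ≤ f₁ (B z) + (1 / 2) * ‖z - x‖ ^ 2) →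
        u = x - lam • Badj vs) :=
  fp2o_fixed_point_gives_prox_general N M f₁ hf₁ B Badj hadj x lam hlam prox hprox S hS vs hfix
end

section
/- Let f₁ : ℝ^M → ℝ be convex, B : ℝ^N → ℝ^M linear with adjoint Bᵀ, Q a symmetric positive definite linear map on ℝ^N with inverse Q⁻¹, x ∈ ℝ^N and λ > 0. Define Ŝ(v) = (I − prox_{(1/λ)f₁})(BQ⁻¹x + (I − λBQ⁻¹Bᵀ)v) for v ∈ ℝ^M. If v* ∈ ℝ^M satisfies v* = Ŝ(v*), then u* = Q⁻¹(x − λBᵀv*) is a minimizer over u ∈ ℝ^N of f₁(Bu) + (1/2)⟨u, Qu⟩ − ⟨x, u⟩. -/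
/-!
Write `u* = Q⁻¹(x − λBᵀv*)` and `w = BQ⁻¹x + (I − λBQ⁻¹Bᵀ)v*`, so that `Bu* = w − v*`. The fixed-point
equation says `prox_{(1/λ)f₁}(w) = w − v* = Bu*`, and the optimality condition of the proximal
problem makes `λv*` a subgradient of `f₁` at `Bu*`. On the other hand `Qu* − x = −λBᵀv*` is the
gradient of the quadratic part at `u*`, and the two first-order inequalities add up to the claim.
-/

open scoped RealInnerProductSpace
open Filter Topology

section

variable {E : Type*} [NormedAddCommGroup E] [InnerProductSpace ℝ E]

theorem ConvexOn.add_inner_sub_le_of_isMinOn_prox {g : E → ℝ} (hg : ConvexOn ℝ Set.univ g)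
    {w p : E} (hp : IsMinOn (fun y => g y + (1 / 2) * ‖y - w‖ ^ 2) Set.univ p) (z : E) :
    g p + ⟪w - p, z - p⟫ ≤ g z := by
  -- Comparing `p` with `p + t • (z - p)` and letting `t → 0⁺` gives the first-order condition.
  have hstep : ∀ t : ℝ, 0 < t → t ≤ 1 →
      g p + ⟪w - p, z - p⟫ - g z ≤ t * ((1 / 2) * ‖z - p‖ ^ 2) := by
    intro t ht0 ht1
    have hmin := isMinOn_univ_iff.mp hp (p + t • (z - p))
    have hconv : g (p + t • (z - p)) ≤ (1 - t) * g p + t * g z := by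
      have hcomb : p + t • (z - p) = (1 - t) • p + t • z := by
        rw [smul_sub, sub_smul, one_smul]; abel
      rw [hcomb]
      exact hg.2 (Set.mem_univ p) (Set.mem_univ z) (by linarith) ht0.le (by ring)
    have hexpand : ‖p + t • (z - p) - w‖ ^ 2
        = ‖p - w‖ ^ 2 - 2 * t * ⟪w - p, z - p⟫ + t ^ 2 * ‖z - p‖ ^ 2 := by
      rw [show p + t • (z - p) - w = (p - w) + t • (z - p) by abel, norm_add_sq_real,
        norm_smul, real_inner_smul_right, Real.norm_eq_abs, abs_of_pos ht0,
        ← neg_sub w p, inner_neg_left]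
      ring
    rw [hexpand] at hmin
    have : t * (g p + ⟪w - p, z - p⟫ - g z) ≤ t * (t * ((1 / 2) * ‖z - p‖ ^ 2)) := by
      nlinarith
    exact le_of_mul_le_mul_left this ht0
  have hlim : Tendsto (fun t : ℝ => t * ((1 / 2) * ‖z - p‖ ^ 2)) (𝓝[>] 0) (𝓝 0) := by
    have h0 : Tendsto (fun t : ℝ => t) (𝓝[>] 0) (𝓝 0) := nhdsWithin_le_nhds
    simpa using h0.mul_const ((1 / 2) * ‖z - p‖ ^ 2)
  have hev : ∀ᶠ t in 𝓝[>] (0 : ℝ),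
      g p + ⟪w - p, z - p⟫ - g z ≤ t * ((1 / 2) * ‖z - p‖ ^ 2) := by
    filter_upwards [Ioo_mem_nhdsGT one_pos] with t ht using hstep t ht.1 ht.2.le
  linarith [ge_of_tendsto hlim hev]

theorem LinearMap.IsPositive.half_inner_self_add_inner_sub_le {T : E →ₗ[ℝ] E}
    (hT : T.IsPositive) (u v : E) :
    (1 / 2) * ⟪v, T v⟫ + ⟪T v, u - v⟫ ≤ (1 / 2) * ⟪u, T u⟫ := by
  -- The gap is `½⟪u - v, T (u - v)⟫`.
  have h := hT.inner_nonneg_right (u - v)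
  rw [map_sub, inner_sub_left, inner_sub_right, inner_sub_right] at h
  rw [inner_sub_right]
  linarith [real_inner_comm u (T v), hT.isSymmetric v u, hT.isSymmetric v v]

end

theorem fp2o_general_quadratic_fixed_point_general (N M : ℕ)
    (f₁ : EuclideanSpace ℝ (Fin M) → ℝ) (hf₁ : ConvexOn ℝ Set.univ f₁)
    (B : EuclideanSpace ℝ (Fin N) →L[ℝ] EuclideanSpace ℝ (Fin M))
    (Badj : EuclideanSpace ℝ (Fin M) →L[ℝ] EuclideanSpace ℝ (Fin N))
    (hadj : ∀ (x : EuclideanSpace ℝ (Fin N)) (y : EuclideanSpace ℝ (Fin M)),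
      ⟪B x, y⟫ = ⟪x, Badj y⟫)
    (Q Qinv : EuclideanSpace ℝ (Fin N) →L[ℝ] EuclideanSpace ℝ (Fin N))
    (hQsymm : ∀ x y : EuclideanSpace ℝ (Fin N), ⟪Q x, y⟫ = ⟪x, Q y⟫)
    (hQpos : ∀ x : EuclideanSpace ℝ (Fin N), x ≠ 0 → 0 < ⟪x, Q x⟫)
    (hQinv₂ : ∀ x, Q (Qinv x) = x)
    (x : EuclideanSpace ℝ (Fin N))
    (lam : ℝ) (hlam : 0 < lam)
    (prox : EuclideanSpace ℝ (Fin M) → EuclideanSpace ℝ (Fin M))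
    (hprox : ∀ w p, prox w = p ↔
      ∀ z : EuclideanSpace ℝ (Fin M),
        (1 / lam) * f₁ p + (1 / 2) * ‖p - w‖ ^ 2 ≤ (1 / lam) * f₁ z + (1 / 2) * ‖z - w‖ ^ 2)
    (S : EuclideanSpace ℝ (Fin M) → EuclideanSpace ℝ (Fin M))
    (hS : ∀ v, S v = (B (Qinv x) + (v - lam • B (Qinv (Badj v))))
      - prox (B (Qinv x) + (v - lam • B (Qinv (Badj v)))))
    (vs : EuclideanSpace ℝ (Fin M)) (hfix : vs = S vs) :
    ∀ u : EuclideanSpace ℝ (Fin N),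
      f₁ (B (Qinv (x - lam • Badj vs)))
          + (1 / 2) * ⟪Qinv (x - lam • Badj vs), Q (Qinv (x - lam • Badj vs))⟫
          - ⟪x, Qinv (x - lam • Badj vs)⟫
        ≤ f₁ (B u) + (1 / 2) * ⟪u, Q u⟫ - ⟪x, u⟫ := by
  intro u
  set us := Qinv (x - lam • Badj vs)
  set w := B (Qinv x) + (vs - lam • B (Qinv (Badj vs)))
  have hBus : B us = w - vs := by
    simp only [us, w, map_sub, map_smul]
    abel
  have hprox_w : prox w = B us := by
    have hvs : vs = w - prox w := hfix.trans (hS vs)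
    rw [hBus, hvs, sub_sub_cancel]
  -- `λ v*` is a subgradient of `f₁` at `B u*`.
  have hsub : f₁ (B us) + lam * ⟪vs, B u - B us⟫ ≤ f₁ (B u) := by
    have h := (hf₁.smul (by positivity : (0 : ℝ) ≤ 1 / lam)).add_inner_sub_le_of_isMinOn_prox
      (isMinOn_univ_iff.mpr ((hprox w (B us)).mp hprox_w)) (B u)
    rw [show w - B us = vs by rw [hBus, sub_sub_cancel]] at h
    calc f₁ (B us) + lam * ⟪vs, B u - B us⟫
        = lam * ((1 / lam) * f₁ (B us) + ⟪vs, B u - B us⟫) := by field_simp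
      _ ≤ lam * ((1 / lam) * f₁ (B u)) := by gcongr; exact h
      _ = f₁ (B u) := by field_simp
  have hQ : (Q : EuclideanSpace ℝ (Fin N) →ₗ[ℝ] EuclideanSpace ℝ (Fin N)).IsPositive := by
    refine (LinearMap.isPositive_iff _).mpr ⟨hQsymm, fun y => ?_⟩
    rcases eq_or_ne y 0 with rfl | hy
    · simp
    · exact (hQsymm y y ▸ hQpos y hy).le
  have hquad : (1 / 2) * ⟪us, Q us⟫ + ⟪Q us, u - us⟫ ≤ (1 / 2) * ⟪u, Q u⟫ :=
    hQ.half_inner_self_add_inner_sub_le u us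
  have hlin : ⟪Q us, u - us⟫ = ⟪x, u - us⟫ - lam * ⟪vs, B u - B us⟫ := by
    rw [hQinv₂, inner_sub_left, real_inner_smul_left, real_inner_comm (u - us) (Badj vs), ← hadj,
      map_sub, real_inner_comm vs]
  rw [hlin, inner_sub_right] at hquad
  linarith

/-- Let `f₁ : ℝ^M → ℝ` be convex, `B` linear with adjoint `Bᵀ`, `Q` symmetric positive
definite with inverse `Q⁻¹`, `x ∈ ℝ^N` and `λ > 0`. If `v* = Ŝ(v*)` where
`Ŝ(v) = (I − prox_{(1/λ)f₁})(BQ⁻¹x + (I − λBQ⁻¹Bᵀ)v)`, then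
`u* = Q⁻¹(x − λBᵀv*)` minimizes `u ↦ f₁(Bu) + (1/2)⟨u, Qu⟩ − ⟨x, u⟩`. -/
theorem fp2o_general_quadratic_fixed_point (N M : ℕ)
    (f₁ : EuclideanSpace ℝ (Fin M) → ℝ) (hf₁ : ConvexOn ℝ Set.univ f₁)
    (B : EuclideanSpace ℝ (Fin N) →L[ℝ] EuclideanSpace ℝ (Fin M))
    (Badj : EuclideanSpace ℝ (Fin M) →L[ℝ] EuclideanSpace ℝ (Fin N))
    (hadj : ∀ (x : EuclideanSpace ℝ (Fin N)) (y : EuclideanSpace ℝ (Fin M)),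
      ⟪B x, y⟫ = ⟪x, Badj y⟫)
    (Q Qinv : EuclideanSpace ℝ (Fin N) →L[ℝ] EuclideanSpace ℝ (Fin N))
    (hQsymm : ∀ x y : EuclideanSpace ℝ (Fin N), ⟪Q x, y⟫ = ⟪x, Q y⟫)
    (hQpos : ∀ x : EuclideanSpace ℝ (Fin N), x ≠ 0 → 0 < ⟪x, Q x⟫)
    (hQinv₁ : ∀ x, Qinv (Q x) = x) (hQinv₂ : ∀ x, Q (Qinv x) = x)
    (x : EuclideanSpace ℝ (Fin N))
    (lam : ℝ) (hlam : 0 < lam)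
    (prox : EuclideanSpace ℝ (Fin M) → EuclideanSpace ℝ (Fin M))
    (hprox : ∀ w p, prox w = p ↔
      ∀ z : EuclideanSpace ℝ (Fin M),
        (1 / lam) * f₁ p + (1 / 2) * ‖p - w‖ ^ 2 ≤ (1 / lam) * f₁ z + (1 / 2) * ‖z - w‖ ^ 2)
    (S : EuclideanSpace ℝ (Fin M) → EuclideanSpace ℝ (Fin M))
    (hS : ∀ v, S v = (B (Qinv x) + (v - lam • B (Qinv (Badj v))))
      - prox (B (Qinv x) + (v - lam • B (Qinv (Badj v)))))
    (vs : EuclideanSpace ℝ (Fin M)) (hfix : vs = S vs) :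
    ∀ u : EuclideanSpace ℝ (Fin N),
      f₁ (B (Qinv (x - lam • Badj vs)))
          + (1 / 2) * ⟪Qinv (x - lam • Badj vs), Q (Qinv (x - lam • Badj vs))⟫
          - ⟪x, Qinv (x - lam • Badj vs)⟫
        ≤ f₁ (B u) + (1 / 2) * ⟪u, Q u⟫ - ⟪x, u⟫ :=
  fp2o_general_quadratic_fixed_point_general N M f₁ hf₁ B Badj hadj Q Qinv hQsymm hQpos hQinv₂ x lam
    hlam prox hprox S hS vs hfix
end

section
/- Let f₁ : ℝ^M → ℝ be convex, B : ℝ^N → ℝ^M linear with adjoint Bᵀ, and f₂ : ℝ^N → ℝ convex and differentiable with gradient ∇f₂. Then u* ∈ ℝ^N minimizes u ↦ f₁(Bu) + f₂(u) over ℝ^N if and only if there exists y ∈ ∂f₁(Bu*) such that ∇f₂(u*) + Bᵀy = 0. -/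
/-!
If `y ∈ ∂f₁(Bu*)` and `∇f₂(u*) + Bᵀy = 0`, the subgradient inequality for `f₁` at `Bu*` and the
gradient inequality for `f₂` at `u*` add up to minimality, since `⟪y, B(u - u*)⟫` and
`⟪∇f₂(u*), u - u*⟫` cancel.

Conversely, comparing `u*` with the points of the segment towards `u` and letting them approach
`u*` shows that `-∇f₂(u*)` is a subgradient of `f₁ ∘ B` at `u*`. The one-sided directional
derivative `f₁'(Bu*; ·)` of the convex function `f₁` is sublinear, and the functional
`Bv ↦ -⟪∇f₂(u*), v⟫` on the range of `B` lies below it. By Hahn–Banach it extends to a linear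
functional `⟪y, ·⟫ ≤ f₁'(Bu*; ·)`; such a `y` is a subgradient of `f₁` at `Bu*`, and
`Bᵀy = -∇f₂(u*)`.
-/

open scoped RealInnerProductSpace

open Set Filter Topology

section Subgradient

variable {F : Type*} [AddCommGroup F] [Module ℝ F]

/-- `g ∈ ∂f(a)`, with subgradients taken as linear functionals. -/
def IsSubgradient (f : F → ℝ) (g : F →ₗ[ℝ] ℝ) (a : F) : Prop :=
  ∀ z, f a + g (z - a) ≤ f z

noncomputable def rightLineDeriv (f : F → ℝ) (a z : F) : ℝ :=
  derivWithin (fun t : ℝ => f (a + t • z)) (Ioi 0) 0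

variable {f : F → ℝ}

theorem ConvexOn.comp_line (hf : ConvexOn ℝ univ f) (a z : F) :
    ConvexOn ℝ univ (fun t : ℝ => f (a + t • z)) := by
  simpa [Function.comp_def, AffineMap.lineMap_apply_module', add_comm] using
    hf.comp_affineMap (AffineMap.lineMap a (z + a))

theorem ConvexOn.hasDerivWithinAt_rightLineDeriv (hf : ConvexOn ℝ univ f) (a z : F) :
    HasDerivWithinAt (fun t : ℝ => f (a + t • z)) (rightLineDeriv f a z) (Ioi 0) 0 :=
  (hf.comp_line a z).hasDerivWithinAt_rightDeriv_of_mem_interior (by simp)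

theorem ConvexOn.tendsto_rightLineDeriv (hf : ConvexOn ℝ univ f) (a z : F) :
    Tendsto (fun t : ℝ => (f (a + t • z) - f a) / t) (𝓝[>] 0) (𝓝 (rightLineDeriv f a z)) := by
  simpa [slope_fun_def_field] using
    hasDerivWithinAt_iff_tendsto_slope.1 (hf.hasDerivWithinAt_rightLineDeriv a z)

theorem ConvexOn.rightLineDeriv_le (hf : ConvexOn ℝ univ f) (a z : F) {t : ℝ} (ht : 0 < t) :
    rightLineDeriv f a z ≤ (f (a + t • z) - f a) / t := by
  have := (hf.comp_line a z).rightDeriv_le_slope_of_mem_interior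
    (by simp : (0 : ℝ) ∈ interior univ) (mem_univ t) ht
  simpa [rightLineDeriv, slope_def_field] using this

theorem ConvexOn.le_rightLineDeriv (hf : ConvexOn ℝ univ f) (a z : F) {b : ℝ}
    (hb : ∀ t > 0, b ≤ (f (a + t • z) - f a) / t) : b ≤ rightLineDeriv f a z :=
  ge_of_tendsto (hf.tendsto_rightLineDeriv a z) (eventually_nhdsWithin_of_forall hb)

theorem ConvexOn.rightLineDeriv_smul (hf : ConvexOn ℝ univ f) (a z : F) {r : ℝ} (hr : 0 < r) :
    rightLineDeriv f a (r • z) = r * rightLineDeriv f a z := by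
  have hline : HasDerivWithinAt (fun t : ℝ => f (a + t • z)) (rightLineDeriv f a z) (Ioi 0)
      (0 * r) := by
    simpa using hf.hasDerivWithinAt_rightLineDeriv a z
  have hscale : HasDerivWithinAt (fun t : ℝ => t * r) r (Ioi 0) 0 := by
    simpa using (hasDerivWithinAt_id (0 : ℝ) (Ioi 0)).mul_const r
  have := (hline.scomp 0 hscale fun t ht => mul_pos ht hr).derivWithin (uniqueDiffWithinAt_Ioi 0)
  simpa [rightLineDeriv, Function.comp_def, mul_smul, smul_comm _ r, mul_comm] using this

theorem ConvexOn.rightLineDeriv_add_le (hf : ConvexOn ℝ univ f) (a x z : F) :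
    rightLineDeriv f a (x + z) ≤ rightLineDeriv f a x + rightLineDeriv f a z := by
  have hmid : ∀ t > 0, (f (a + t • (x + z)) - f a) / t ≤
      2⁻¹ * ((f (a + t • (2 : ℝ) • x) - f a) / t) +
        2⁻¹ * ((f (a + t • (2 : ℝ) • z) - f a) / t) := by
    intro t ht
    have := hf.2 (mem_univ (a + t • (2 : ℝ) • x)) (mem_univ (a + t • (2 : ℝ) • z))
      (by norm_num : (0 : ℝ) ≤ 2⁻¹) (by norm_num : (0 : ℝ) ≤ 2⁻¹) (by norm_num)
    have hpt : (2⁻¹ : ℝ) • (a + t • (2 : ℝ) • x) + (2⁻¹ : ℝ) • (a + t • (2 : ℝ) • z) =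
        a + t • (x + z) := by module
    rw [hpt, smul_eq_mul, smul_eq_mul] at this
    rw [← mul_div_assoc, ← mul_div_assoc, ← add_div, div_le_div_iff_of_pos_right ht]
    linarith
  have := le_of_tendsto_of_tendsto (hf.tendsto_rightLineDeriv a (x + z))
    (((hf.tendsto_rightLineDeriv a ((2 : ℝ) • x)).const_mul 2⁻¹).add
      ((hf.tendsto_rightLineDeriv a ((2 : ℝ) • z)).const_mul 2⁻¹))
    (eventually_nhdsWithin_of_forall hmid)
  simpa [hf.rightLineDeriv_smul a _ two_pos] using this

theorem exists_extension_comp_of_le_sublinear {E : Type*} [AddCommGroup E] [Module ℝ E]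
    (B : E →ₗ[ℝ] F) (ℓ : E →ₗ[ℝ] ℝ) (N : F → ℝ)
    (N_hom : ∀ c : ℝ, 0 < c → ∀ x, N (c • x) = c * N x) (N_add : ∀ x y, N (x + y) ≤ N x + N y)
    (hℓ : ∀ v, ℓ v ≤ N (B v)) :
    ∃ g : F →ₗ[ℝ] ℝ, g ∘ₗ B = ℓ ∧ ∀ x, g x ≤ N x := by
  have N_zero : N 0 = 0 := by
    have := N_hom 2 two_pos 0
    rw [smul_zero] at this
    linarith
  have hker : LinearMap.ker B ≤ LinearMap.ker ℓ := by
    intro v hv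
    rw [LinearMap.mem_ker] at hv ⊢
    have h₁ := hℓ v
    have h₂ := hℓ (-v)
    rw [map_neg, map_neg, hv, neg_zero, N_zero] at h₂
    rw [hv, N_zero] at h₁
    linarith
  let ℓ' : LinearMap.range B →ₗ[ℝ] ℝ :=
    (LinearMap.ker B).liftQ ℓ hker ∘ₗ B.quotKerEquivRange.symm.toLinearMap
  have hℓ' : ∀ v, ℓ' ⟨B v, LinearMap.mem_range_self B v⟩ = ℓ v := fun v => by
    simp [ℓ', LinearMap.quotKerEquivRange_symm_apply_image]
  obtain ⟨g, hg_ext, hg_le⟩ := exists_extension_of_le_sublinear ⟨LinearMap.range B, ℓ'⟩ N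
    N_hom N_add (by rintro ⟨_, v, rfl⟩; exact (hℓ' v).trans_le (hℓ v))
  exact ⟨g, LinearMap.ext fun v => (hg_ext ⟨B v, _⟩).trans (hℓ' v), hg_le⟩

variable {E : Type*} [AddCommGroup E] [Module ℝ E]

theorem IsSubgradient.comp {g : F →ₗ[ℝ] ℝ} {B : E →ₗ[ℝ] F} {u : E}
    (h : IsSubgradient f g (B u)) : IsSubgradient (f ∘ B) (g ∘ₗ B) u :=
  fun v => by simpa using h (B v)

theorem IsSubgradient.exists_of_comp {B : E →ₗ[ℝ] F} {ℓ : E →ₗ[ℝ] ℝ} {u : E}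
    (hf : ConvexOn ℝ univ f) (h : IsSubgradient (f ∘ B) ℓ u) :
    ∃ g : F →ₗ[ℝ] ℝ, g ∘ₗ B = ℓ ∧ IsSubgradient f g (B u) := by
  obtain ⟨g, hgB, hg⟩ := exists_extension_comp_of_le_sublinear B ℓ (rightLineDeriv f (B u))
    (fun c hc x => hf.rightLineDeriv_smul _ x hc) (hf.rightLineDeriv_add_le _)
    fun v => hf.le_rightLineDeriv _ _ fun t ht => by
      have := h (u + t • v)
      simp only [Function.comp_apply, add_sub_cancel_left, map_add, map_smul, smul_eq_mul] at this
      rw [le_div_iff₀ ht]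
      linarith
  refine ⟨g, hgB, fun z => ?_⟩
  have := (hg (z - B u)).trans (hf.rightLineDeriv_le (B u) (z - B u) one_pos)
  simp only [one_smul, add_sub_cancel, div_one] at this
  linarith

end Subgradient

section Differentiable

variable {E : Type*} [NormedAddCommGroup E] [NormedSpace ℝ E] {φ ψ : E → ℝ} {ψ' : E →L[ℝ] ℝ}
  {x : E}

theorem ConvexOn.isSubgradient_of_hasFDerivAt (hψ : ConvexOn ℝ univ ψ)
    (hψ' : HasFDerivAt ψ ψ' x) : IsSubgradient ψ ψ' x := fun y => by
  have := (hψ.comp_line x (y - x)).le_slope_of_hasDerivAt (mem_univ 0) (mem_univ 1) one_pos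
    (hψ'.hasLineDerivAt (y - x))
  simp only [slope_def_field, one_smul, zero_smul, add_zero, add_sub_cancel, sub_zero,
    div_one] at this
  simp only [ContinuousLinearMap.coe_coe]
  linarith

theorem ConvexOn.isSubgradient_neg_of_isMinOn_add (hφ : ConvexOn ℝ univ φ)
    (hψ' : HasFDerivAt ψ ψ' x) (hmin : IsMinOn (φ + ψ) univ x) :
    IsSubgradient φ (-ψ' : E →L[ℝ] ℝ) x := fun y => by
  have hslope : ∀ t ∈ Ioc (0 : ℝ) 1, φ x - φ y ≤ t⁻¹ • (ψ (x + t • (y - x)) - ψ x) := by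
    rintro t ⟨ht₀, ht₁⟩
    have hconv := hφ.2 (mem_univ x) (mem_univ y) (sub_nonneg.2 ht₁) ht₀.le (sub_add_cancel 1 t)
    have hpt : (1 - t) • x + t • y = x + t • (y - x) := by module
    rw [hpt, smul_eq_mul, smul_eq_mul] at hconv
    have hle : φ x + ψ x ≤ φ (x + t • (y - x)) + ψ (x + t • (y - x)) := hmin (mem_univ _)
    rw [smul_eq_mul, ← div_eq_inv_mul, le_div_iff₀ ht₀]
    linarith
  have := ge_of_tendsto (hψ'.hasLineDerivAt (y - x)).tendsto_slope_zero_right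
    (eventually_of_mem (Ioc_mem_nhdsGT one_pos) hslope)
  simp only [ContinuousLinearMap.coe_coe, neg_apply]
  linarith

theorem IsSubgradient.isMinOn_add (hφ : IsSubgradient φ (-ψ' : E →L[ℝ] ℝ) x)
    (hψ : ConvexOn ℝ univ ψ) (hψ' : HasFDerivAt ψ ψ' x) : IsMinOn (φ + ψ) univ x := fun y _ => by
  have h₁ := hφ y
  have h₂ := hψ.isSubgradient_of_hasFDerivAt hψ' y
  simp only [ContinuousLinearMap.coe_coe, neg_apply] at h₁ h₂
  show φ x + ψ x ≤ φ y + ψ y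
  linarith

end Differentiable

section InnerProduct

variable {E F : Type*} [NormedAddCommGroup E] [InnerProductSpace ℝ E]
  [NormedAddCommGroup F] [InnerProductSpace ℝ F]

theorem exists_innerₛₗ_eq [FiniteDimensional ℝ F] (g : F →ₗ[ℝ] ℝ) : ∃ y : F, innerₛₗ ℝ y = g :=
  ⟨(InnerProductSpace.toDual ℝ F).symm (LinearMap.toContinuousLinearMap g),
    LinearMap.ext fun _ => InnerProductSpace.toDual_symm_apply⟩

theorem innerₛₗ_comp_eq_neg_toDual_iff [CompleteSpace E] {B : E →ₗ[ℝ] F} {Badj : F →ₗ[ℝ] E}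
    (hadj : ∀ x y, ⟪B x, y⟫ = ⟪x, Badj y⟫) (c : E) (y : F) :
    innerₛₗ ℝ y ∘ₗ B = (-InnerProductSpace.toDual ℝ E c : E →L[ℝ] ℝ) ↔ c + Badj y = 0 := by
  have hadj' : ∀ v, ⟪y, B v⟫ = ⟪Badj y, v⟫ := fun v => by
    rw [real_inner_comm, hadj, real_inner_comm]
  rw [add_eq_zero_iff_neg_eq, LinearMap.ext_iff]
  simp only [LinearMap.comp_apply, innerₛₗ_apply_apply, ContinuousLinearMap.coe_coe, neg_apply,
    InnerProductSpace.toDual_apply_apply, hadj']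
  refine ⟨fun h => ext_inner_right ℝ fun v => ?_, fun h v => ?_⟩
  · rw [inner_neg_left, h]
  · rw [← h, inner_neg_left]

end InnerProduct

/-- First-order optimality for the composite problem: `u*` minimizes
`u ↦ f₁(Bu) + f₂(u)` iff there exists `y ∈ ∂f₁(Bu*)` with `∇f₂(u*) + Bᵀy = 0`. -/
theorem composite_first_order_optimality (N M : ℕ)
    (f₁ : EuclideanSpace ℝ (Fin M) → ℝ) (hf₁ : ConvexOn ℝ Set.univ f₁)
    (B : EuclideanSpace ℝ (Fin N) →L[ℝ] EuclideanSpace ℝ (Fin M))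
    (Badj : EuclideanSpace ℝ (Fin M) →L[ℝ] EuclideanSpace ℝ (Fin N))
    (hadj : ∀ (x : EuclideanSpace ℝ (Fin N)) (y : EuclideanSpace ℝ (Fin M)),
      ⟪B x, y⟫ = ⟪x, Badj y⟫)
    (f₂ : EuclideanSpace ℝ (Fin N) → ℝ) (hf₂ : ConvexOn ℝ Set.univ f₂)
    (gradf₂ : EuclideanSpace ℝ (Fin N) → EuclideanSpace ℝ (Fin N))
    (hgrad : ∀ u, HasGradientAt f₂ (gradf₂ u) u)
    (us : EuclideanSpace ℝ (Fin N)) :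
    (∀ u : EuclideanSpace ℝ (Fin N), f₁ (B us) + f₂ us ≤ f₁ (B u) + f₂ u) ↔
      ∃ y : EuclideanSpace ℝ (Fin M),
        (∀ z : EuclideanSpace ℝ (Fin M), f₁ (B us) + ⟪y, z - B us⟫ ≤ f₁ z) ∧
        gradf₂ us + Badj y = 0 := by
  have hφ : ConvexOn ℝ univ (f₁ ∘ B) := by simpa using hf₁.comp_linearMap B.toLinearMap
  have hψ : HasFDerivAt f₂ (InnerProductSpace.toDual ℝ _ (gradf₂ us)) us := hgrad us
  have hdual := innerₛₗ_comp_eq_neg_toDual_iff (B := B.toLinearMap) (Badj := Badj.toLinearMap)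
    hadj (gradf₂ us)
  constructor
  · intro hmin
    have hsub := hφ.isSubgradient_neg_of_isMinOn_add hψ (isMinOn_univ_iff.2 hmin)
    obtain ⟨g, hgB, hg⟩ := hsub.exists_of_comp (B := B.toLinearMap) hf₁
    obtain ⟨y, rfl⟩ := exists_innerₛₗ_eq g
    exact ⟨y, hg, (hdual y).1 hgB⟩
  · rintro ⟨y, hy, hyc⟩
    have hsub := IsSubgradient.comp (g := innerₛₗ ℝ y) (B := B.toLinearMap) hy
    rw [(hdual y).2 hyc] at hsub
    exact isMinOn_univ_iff.1 (hsub.isMinOn_add hf₂ hψ)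
end

section
/- Let f₂ : ℝ^N → ℝ be differentiable with gradient ∇f₂ satisfying the co-coercivity inequality ⟨∇f₂(v) − ∇f₂(w), v − w⟩ ≥ β‖∇f₂(v) − ∇f₂(w)‖² for all v, w ∈ ℝ^N and some β > 0, and let Q be a symmetric positive definite linear map on ℝ^N with inverse Q⁻¹. Define h(u) = u − Q⁻¹∇f₂(u). Then for all u₁, u₂ ∈ ℝ^N: ‖h(u₁) − h(u₂)‖²_Q ≤ ‖u₁ − u₂‖²_Q − (2β‖∇f₂(u₁) − ∇f₂(u₂)‖² − ⟨∇f₂(u₁) − ∇f₂(u₂), Q⁻¹(∇f₂(u₁) − ∇f₂(u₂))⟩). -/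
/-! Expanding the `Q`-norm of `(u₁ - u₂) - Q⁻¹ Δg`, symmetry of `Q` and `Q Q⁻¹ = id` reduce the
cross term to `-2 ⟪Δg, u₁ - u₂⟫`, which co-coercivity bounds by `-2β ‖Δg‖²`. -/

open scoped RealInnerProductSpace

theorem LinearMap.IsSymmetric.inner_sub_apply_sub_of_rightInverse {E : Type*}
    [NormedAddCommGroup E] [InnerProductSpace ℝ E] {Q Qinv : E →ₗ[ℝ] E} (hQ : Q.IsSymmetric)
    (hQinv : Function.RightInverse Qinv Q) (d g : E) :
    ⟪d - Qinv g, Q (d - Qinv g)⟫ = ⟪d, Q d⟫ - 2 * ⟪g, d⟫ + ⟪g, Qinv g⟫ := by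
  rw [inner_sub_left, map_sub, inner_sub_right, inner_sub_right, hQinv, ← hQ (Qinv g) d, hQinv,
    real_inner_comm (Qinv g) g, real_inner_comm d g]
  ring

theorem h_contraction_estimate_general (N : ℕ)
    (gradf₂ : EuclideanSpace ℝ (Fin N) → EuclideanSpace ℝ (Fin N))
    (β : ℝ)
    (hcoco : ∀ v w : EuclideanSpace ℝ (Fin N),
      β * ‖gradf₂ v - gradf₂ w‖ ^ 2 ≤ ⟪gradf₂ v - gradf₂ w, v - w⟫)
    (Q Qinv : EuclideanSpace ℝ (Fin N) →L[ℝ] EuclideanSpace ℝ (Fin N))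
    (hQsymm : ∀ x y : EuclideanSpace ℝ (Fin N), ⟪Q x, y⟫ = ⟪x, Q y⟫)
    (hQinv₂ : ∀ x, Q (Qinv x) = x)
    (u₁ u₂ : EuclideanSpace ℝ (Fin N)) :
    ⟪(u₁ - Qinv (gradf₂ u₁)) - (u₂ - Qinv (gradf₂ u₂)),
        Q ((u₁ - Qinv (gradf₂ u₁)) - (u₂ - Qinv (gradf₂ u₂)))⟫
      ≤ ⟪u₁ - u₂, Q (u₁ - u₂)⟫
        - (2 * β * ‖gradf₂ u₁ - gradf₂ u₂‖ ^ 2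
            - ⟪gradf₂ u₁ - gradf₂ u₂, Qinv (gradf₂ u₁ - gradf₂ u₂)⟫) := by
  have hdiff : (u₁ - Qinv (gradf₂ u₁)) - (u₂ - Qinv (gradf₂ u₂))
      = (u₁ - u₂) - Qinv (gradf₂ u₁ - gradf₂ u₂) := by
    rw [map_sub]; abel
  have hexpand := LinearMap.IsSymmetric.inner_sub_apply_sub_of_rightInverse
    (Q := Q.toLinearMap) (Qinv := Qinv.toLinearMap) hQsymm hQinv₂ (u₁ - u₂)
    (gradf₂ u₁ - gradf₂ u₂)
  simp only [ContinuousLinearMap.coe_coe] at hexpand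
  rw [hdiff, hexpand]
  linarith [hcoco u₁ u₂]

/-- For `h(u) = u − Q⁻¹∇f₂(u)` with `∇f₂` co-coercive with constant `β` and `Q`
symmetric positive definite:
`‖h(u₁) − h(u₂)‖²_Q ≤ ‖u₁ − u₂‖²_Q − (2β‖Δg‖² − ⟨Δg, Q⁻¹Δg⟩)` where
`Δg = ∇f₂(u₁) − ∇f₂(u₂)`. -/
theorem h_contraction_estimate (N : ℕ)
    (f₂ : EuclideanSpace ℝ (Fin N) → ℝ)
    (gradf₂ : EuclideanSpace ℝ (Fin N) → EuclideanSpace ℝ (Fin N))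
    (hgrad : ∀ u, HasGradientAt f₂ (gradf₂ u) u)
    (β : ℝ) (hβ : 0 < β)
    (hcoco : ∀ v w : EuclideanSpace ℝ (Fin N),
      β * ‖gradf₂ v - gradf₂ w‖ ^ 2 ≤ ⟪gradf₂ v - gradf₂ w, v - w⟫)
    (Q Qinv : EuclideanSpace ℝ (Fin N) →L[ℝ] EuclideanSpace ℝ (Fin N))
    (hQsymm : ∀ x y : EuclideanSpace ℝ (Fin N), ⟪Q x, y⟫ = ⟪x, Q y⟫)
    (hQpos : ∀ x : EuclideanSpace ℝ (Fin N), x ≠ 0 → 0 < ⟪x, Q x⟫)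
    (hQinv₁ : ∀ x, Qinv (Q x) = x) (hQinv₂ : ∀ x, Q (Qinv x) = x)
    (u₁ u₂ : EuclideanSpace ℝ (Fin N)) :
    ⟪(u₁ - Qinv (gradf₂ u₁)) - (u₂ - Qinv (gradf₂ u₂)),
        Q ((u₁ - Qinv (gradf₂ u₁)) - (u₂ - Qinv (gradf₂ u₂)))⟫
      ≤ ⟪u₁ - u₂, Q (u₁ - u₂)⟫
        - (2 * β * ‖gradf₂ u₁ - gradf₂ u₂‖ ^ 2
            - ⟪gradf₂ u₁ - gradf₂ u₂, Qinv (gradf₂ u₁ - gradf₂ u₂)⟫) :=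
  h_contraction_estimate_general N gradf₂ β hcoco Q Qinv hQsymm hQinv₂ u₁ u₂
end

section
/- Assume additionally that the operator norm of Q⁻¹ satisfies ‖Q⁻¹‖₂ ≤ 2β (equivalently 2βI − Q⁻¹ is positive semidefinite). Then the operator T is nonexpansive with respect to ‖·‖_{λ,Q}: for all w₁, w₂ ∈ ℝ^M × ℝ^N, ‖T(w₁) − T(w₂)‖_{λ,Q} ≤ ‖w₁ − w₂‖_{λ,Q}. -/
/-!
Write `u = u₁ - u₂`, `v = v₁ - v₂`, `d = ∇f₂ u₁ - ∇f₂ u₂`, `g = u - Q⁻¹ d`, `K = B Q⁻¹ Bᵀ`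
and `t = T₁(v₁,u₁) - T₁(v₂,u₂)`. The forward step is `Q`-nonexpansive:
`‖g‖²_Q = ‖u‖²_Q - 2⟪d, u⟫ + ⟪Q⁻¹ d, d⟫ ≤ ‖u‖²_Q` by cocoercivity and `‖Q⁻¹‖ ≤ 2β`.
Since `I - prox` is firmly nonexpansive, `‖t‖² ≤ ⟪t, B g + (I - λK) v⟫`. As
`T₂(v₁,u₁) - T₂(v₂,u₂) = g - λ Q⁻¹ Bᵀ t`, its `Q`-norm is `‖g‖²_Q - 2λ⟪t, B g⟫ + λ²⟪t, K t⟫`,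
and the remaining terms are absorbed by `λ⟪y, K y⟫ ≤ ‖y‖²` (from `λ ≤ 1/λ_max`) at `y = t - v`
together with `⟪v, K v⟫ ≥ 0`.
-/
open scoped RealInnerProductSpace

open Filter Topology in
lemma nonneg_of_forall_nonneg_add_mul {a b : ℝ} (h : ∀ s ∈ Set.Ioc (0 : ℝ) 1, 0 ≤ a + s * b) :
    0 ≤ a := by
  have hlim : Tendsto (fun s : ℝ => a + s * b) (𝓝[>] 0) (𝓝 a) := by
    have : Continuous fun s : ℝ => a + s * b := by fun_prop
    simpa using (this.tendsto 0).mono_left nhdsWithin_le_nhds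
  exact ge_of_tendsto hlim (eventually_of_mem (Ioc_mem_nhdsGT one_pos) h)

section Prox

variable {F : Type*} [NormedAddCommGroup F] [InnerProductSpace ℝ F]

def IsProx (f : F → ℝ) (c : ℝ) (w p : F) : Prop :=
  ∀ z, c * f p + (1 / 2) * ‖p - w‖ ^ 2 ≤ c * f z + (1 / 2) * ‖z - w‖ ^ 2

variable {f : F → ℝ} {c : ℝ} {w p : F}

-- Compare `p` with `p + s • (z - p)` and let `s → 0⁺`.
lemma IsProx.inner_le (hp : IsProx f c w p) (hf : ConvexOn ℝ Set.univ f) (hc : 0 ≤ c) (z : F) :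
    ⟪w - p, z - p⟫ ≤ c * (f z - f p) := by
  refine sub_nonneg.1 (nonneg_of_forall_nonneg_add_mul (b := ‖z - p‖ ^ 2 / 2) fun s ⟨hs, hs1⟩ => ?_)
  have hconv : f (p + s • (z - p)) ≤ (1 - s) * f p + s * f z := by
    have := hf.2 (Set.mem_univ p) (Set.mem_univ z) (by linarith : 0 ≤ 1 - s) hs.le (by ring)
    rwa [smul_eq_mul, smul_eq_mul, show (1 - s) • p + s • z = p + s • (z - p) by module] at this
  have hnorm : ‖p + s • (z - p) - w‖ ^ 2
      = ‖p - w‖ ^ 2 + 2 * s * ⟪p - w, z - p⟫ + s ^ 2 * ‖z - p‖ ^ 2 := by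
    rw [show p + s • (z - p) - w = (p - w) + s • (z - p) by abel, norm_add_sq_real,
      real_inner_smul_right, norm_smul, Real.norm_eq_abs, abs_of_pos hs]
    ring
  have hmin := hp (p + s • (z - p))
  have : 0 ≤ s * (c * (f z - f p) - ⟪w - p, z - p⟫ + s * (‖z - p‖ ^ 2 / 2)) := by
    rw [← neg_sub p w, inner_neg_left]
    nlinarith [mul_le_mul_of_nonneg_left hconv hc]
  exact (mul_nonneg_iff_of_pos_left hs).1 this

lemma IsProx.norm_sub_sq_le_inner (hf : ConvexOn ℝ Set.univ f) (hc : 0 ≤ c) {w₁ w₂ p₁ p₂ : F}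
    (hp₁ : IsProx f c w₁ p₁) (hp₂ : IsProx f c w₂ p₂) :
    ‖p₁ - p₂‖ ^ 2 ≤ ⟪w₁ - w₂, p₁ - p₂⟫ := by
  have h₁ := hp₁.inner_le hf hc p₂
  have h₂ := hp₂.inner_le hf hc p₁
  have : ⟪w₁ - w₂, p₁ - p₂⟫ - ‖p₁ - p₂‖ ^ 2 = -⟪w₁ - p₁, p₂ - p₁⟫ - ⟪w₂ - p₂, p₁ - p₂⟫ := by
    rw [← real_inner_self_eq_norm_sq, ← neg_sub p₁ p₂, inner_neg_right]
    simp only [inner_sub_left, inner_sub_right]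
    ring
  linarith

lemma norm_sub_sq_le_inner_sub_of_norm_sq_le_inner {x y : F} (h : ‖y‖ ^ 2 ≤ ⟪x, y⟫) :
    ‖x - y‖ ^ 2 ≤ ⟪x - y, x⟫ := by
  rw [← real_inner_self_eq_norm_sq] at h ⊢
  simp only [inner_sub_left, inner_sub_right, real_inner_comm x y]
  linarith

lemma IsProx.norm_sub_sub_sq_le_inner (hf : ConvexOn ℝ Set.univ f) (hc : 0 ≤ c) {w₁ w₂ p₁ p₂ : F}
    (hp₁ : IsProx f c w₁ p₁) (hp₂ : IsProx f c w₂ p₂) :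
    ‖(w₁ - p₁) - (w₂ - p₂)‖ ^ 2 ≤ ⟪(w₁ - p₁) - (w₂ - p₂), w₁ - w₂⟫ := by
  have := norm_sub_sq_le_inner_sub_of_norm_sq_le_inner (hp₁.norm_sub_sq_le_inner hf hc hp₂)
  rwa [show w₁ - w₂ - (p₁ - p₂) = (w₁ - p₁) - (w₂ - p₂) by abel] at this

end Prox

lemma LinearMap.IsSymmetric.inner_map_self_le_mul_norm_sq {E : Type*} [NormedAddCommGroup E]
    [InnerProductSpace ℝ E] [FiniteDimensional ℝ E] {T : E →ₗ[ℝ] E} (hT : T.IsSymmetric) {l : ℝ}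
    (hl : ∀ μ, Module.End.HasEigenvalue T μ → μ ≤ l) (x : E) :
    ⟪x, T x⟫ ≤ l * ‖x‖ ^ 2 := by
  have hn : Module.finrank ℝ E = Module.finrank ℝ E := rfl
  let b := hT.eigenvectorBasis hn
  have hcoord : ∀ i, ⟪x, b i⟫ * ⟪b i, T x⟫ = hT.eigenvalues hn i * (⟪x, b i⟫ * ⟪b i, x⟫) := by
    intro i
    rw [← hT, hT.apply_eigenvectorBasis, real_inner_smul_left, RCLike.ofReal_real_eq_id, id_eq]
    ring
  rw [← b.sum_inner_mul_inner, ← real_inner_self_eq_norm_sq, ← b.sum_inner_mul_inner,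
    Finset.mul_sum]
  refine Finset.sum_le_sum fun i _ => ?_
  rw [hcoord, real_inner_comm (b i) x]
  exact mul_le_mul_of_nonneg_right (hl _ (hT.hasEigenvalue_eigenvalues hn i)) (mul_self_nonneg _)

section Operators

variable {E F : Type*} [NormedAddCommGroup E] [InnerProductSpace ℝ E]
  [NormedAddCommGroup F] [InnerProductSpace ℝ F]
  {B : E →L[ℝ] F} {Badj : F →L[ℝ] E} {Q Qinv : E →L[ℝ] E}

lemma inner_inv_apply_left (hQsymm : ∀ x y, ⟪Q x, y⟫ = ⟪x, Q y⟫)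
    (hQinv : ∀ x, Q (Qinv x) = x) (x y : E) : ⟪Qinv x, y⟫ = ⟪x, Qinv y⟫ := by
  conv_rhs => rw [← hQinv x]
  rw [hQsymm, hQinv]

lemma inner_sub_inv_apply_le (hQsymm : ∀ x y, ⟪Q x, y⟫ = ⟪x, Q y⟫)
    (hQinv : ∀ x, Q (Qinv x) = x) {β : ℝ} (hQnorm : ‖Qinv‖ ≤ 2 * β) {u d : E}
    (hcoco : β * ‖d‖ ^ 2 ≤ ⟪d, u⟫) :
    ⟪u - Qinv d, Q (u - Qinv d)⟫ ≤ ⟪u, Q u⟫ := by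
  have hexpand : ⟪u - Qinv d, Q (u - Qinv d)⟫ = ⟪u, Q u⟫ - 2 * ⟪d, u⟫ + ⟪Qinv d, d⟫ := by
    rw [map_sub, hQinv]
    simp only [inner_sub_left, inner_sub_right]
    rw [← hQsymm (Qinv d) u, hQinv, real_inner_comm u d]
    ring
  have hQinv_d : ⟪Qinv d, d⟫ ≤ 2 * β * ‖d‖ ^ 2 :=
    calc ⟪Qinv d, d⟫ ≤ ‖Qinv d‖ * ‖d‖ := real_inner_le_norm _ _
      _ ≤ ‖Qinv‖ * ‖d‖ * ‖d‖ := by gcongr; exact Qinv.le_opNorm d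
      _ ≤ 2 * β * ‖d‖ * ‖d‖ := by gcongr
      _ = 2 * β * ‖d‖ ^ 2 := by ring
  linarith

lemma inner_comp_inv_adj_symm (hadj : ∀ x y, ⟪B x, y⟫ = ⟪x, Badj y⟫)
    (hQsymm : ∀ x y, ⟪Q x, y⟫ = ⟪x, Q y⟫) (hQinv : ∀ x, Q (Qinv x) = x) (y z : F) :
    ⟪B (Qinv (Badj y)), z⟫ = ⟪y, B (Qinv (Badj z))⟫ := by
  rw [hadj, inner_inv_apply_left hQsymm hQinv, real_inner_comm, ← hadj, real_inner_comm]

lemma inner_comp_inv_adj_self_nonneg (hadj : ∀ x y, ⟪B x, y⟫ = ⟪x, Badj y⟫)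
    (hQinv : ∀ x, Q (Qinv x) = x) (hQ : ∀ x, 0 ≤ ⟪x, Q x⟫) (y : F) :
    0 ≤ ⟪y, B (Qinv (Badj y))⟫ := by
  rw [real_inner_comm, hadj]
  simpa only [hQinv] using hQ (Qinv (Badj y))

lemma inner_sub_smul_inv_adj_self_eq (hadj : ∀ x y, ⟪B x, y⟫ = ⟪x, Badj y⟫)
    (hQsymm : ∀ x y, ⟪Q x, y⟫ = ⟪x, Q y⟫) (hQinv : ∀ x, Q (Qinv x) = x) (lam : ℝ) (g : E) (t : F) :
    ⟪g - lam • Qinv (Badj t), Q (g - lam • Qinv (Badj t))⟫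
      = ⟪g, Q g⟫ - 2 * lam * ⟪t, B g⟫ + lam ^ 2 * ⟪t, B (Qinv (Badj t))⟫ := by
  have h₁ : ⟪g, Badj t⟫ = ⟪t, B g⟫ := by rw [← hadj, real_inner_comm]
  have h₂ : ⟪Qinv (Badj t), Q g⟫ = ⟪t, B g⟫ := by rw [← hQsymm, hQinv, real_inner_comm, h₁]
  have h₃ : ⟪Qinv (Badj t), Badj t⟫ = ⟪t, B (Qinv (Badj t))⟫ := by
    rw [← hadj, real_inner_comm]
  rw [map_sub, map_smul, hQinv]
  simp only [inner_sub_left, inner_sub_right, real_inner_smul_left, real_inner_smul_right]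
  rw [h₁, h₂, h₃]
  ring

lemma inner_sub_smul_inv_adj_add_le (hadj : ∀ x y, ⟪B x, y⟫ = ⟪x, Badj y⟫)
    (hQsymm : ∀ x y, ⟪Q x, y⟫ = ⟪x, Q y⟫) (hQinv : ∀ x, Q (Qinv x) = x)
    (hQ : ∀ x, 0 ≤ ⟪x, Q x⟫) {lam : ℝ} (hlam : 0 ≤ lam)
    (hK : ∀ y, lam * ⟪y, B (Qinv (Badj y))⟫ ≤ ‖y‖ ^ 2) {g : E} {v t : F}
    (ht : ‖t‖ ^ 2 ≤ ⟪t, B g + (v - lam • B (Qinv (Badj v)))⟫) :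
    ⟪g - lam • Qinv (Badj t), Q (g - lam • Qinv (Badj t))⟫ + lam * ‖t‖ ^ 2
      ≤ ⟪g, Q g⟫ + lam * ‖v‖ ^ 2 := by
  have ht' : ‖t‖ ^ 2 ≤ ⟪t, B g⟫ + ⟪t, v⟫ - lam * ⟪t, B (Qinv (Badj v))⟫ := by
    simpa only [inner_add_right, inner_sub_right, real_inner_smul_right, add_sub_assoc] using ht
  have hdiff : lam * (⟪t, B (Qinv (Badj t))⟫ - 2 * ⟪t, B (Qinv (Badj v))⟫
      + ⟪v, B (Qinv (Badj v))⟫) ≤ ‖t‖ ^ 2 - 2 * ⟪t, v⟫ + ‖v‖ ^ 2 := by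
    have := hK (t - v)
    rw [norm_sub_sq_real] at this
    simp only [map_sub, inner_sub_left, inner_sub_right] at this
    rw [← inner_comp_inv_adj_symm hadj hQsymm hQinv v t, real_inner_comm t] at this
    linarith
  have hv := inner_comp_inv_adj_self_nonneg hadj hQinv hQ v
  rw [inner_sub_smul_inv_adj_self_eq hadj hQsymm hQinv]
  nlinarith [mul_le_mul_of_nonneg_left ht' hlam, mul_le_mul_of_nonneg_left hdiff hlam,
    mul_nonneg (mul_nonneg hlam hlam) hv]

lemma mul_inner_comp_inv_adj_self_le [FiniteDimensional ℝ F]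
    (hadj : ∀ x y, ⟪B x, y⟫ = ⟪x, Badj y⟫) (hQsymm : ∀ x y, ⟪Q x, y⟫ = ⟪x, Q y⟫)
    (hQinv : ∀ x, Q (Qinv x) = x) {lam lmax : ℝ} (hlam : 0 < lam)
    (hlmax : ∀ μ, Module.End.HasEigenvalue (B.comp (Qinv.comp Badj)).toLinearMap μ → μ ≤ lmax)
    (hlam_le : lam ≤ 1 / lmax) (y : F) :
    lam * ⟪y, B (Qinv (Badj y))⟫ ≤ ‖y‖ ^ 2 := by
  have hlmax_pos : 0 < lmax := by
    by_contra! h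
    linarith [one_div_nonpos.2 h]
  have hsymm : (B.comp (Qinv.comp Badj)).toLinearMap.IsSymmetric :=
    inner_comp_inv_adj_symm hadj hQsymm hQinv
  rw [le_div_iff₀ hlmax_pos] at hlam_le
  calc lam * ⟪y, B (Qinv (Badj y))⟫ ≤ lam * (lmax * ‖y‖ ^ 2) := by
        gcongr; exact hsymm.inner_map_self_le_mul_norm_sq hlmax y
    _ ≤ ‖y‖ ^ 2 := by nlinarith [sq_nonneg ‖y‖]

end Operators

theorem T_nonexpansive_general (N M : ℕ)
    (f₁ : EuclideanSpace ℝ (Fin M) → ℝ) (hf₁ : ConvexOn ℝ Set.univ f₁)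
    (gradf₂ : EuclideanSpace ℝ (Fin N) → EuclideanSpace ℝ (Fin N))
    (B : EuclideanSpace ℝ (Fin N) →L[ℝ] EuclideanSpace ℝ (Fin M))
    (Badj : EuclideanSpace ℝ (Fin M) →L[ℝ] EuclideanSpace ℝ (Fin N))
    (hadj : ∀ (x : EuclideanSpace ℝ (Fin N)) (y : EuclideanSpace ℝ (Fin M)),
      ⟪B x, y⟫ = ⟪x, Badj y⟫)
    (Q Qinv : EuclideanSpace ℝ (Fin N) →L[ℝ] EuclideanSpace ℝ (Fin N))
    (hQsymm : ∀ x y : EuclideanSpace ℝ (Fin N), ⟪Q x, y⟫ = ⟪x, Q y⟫)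
    (hQpos : ∀ x : EuclideanSpace ℝ (Fin N), x ≠ 0 → 0 < ⟪x, Q x⟫)
    (hQinv₂ : ∀ x, Q (Qinv x) = x)
    (lam : ℝ) (hlam : 0 < lam)
    (β : ℝ)
    (hcoco : ∀ v w : EuclideanSpace ℝ (Fin N),
      β * ‖gradf₂ v - gradf₂ w‖ ^ 2 ≤ ⟪gradf₂ v - gradf₂ w, v - w⟫)
    (lmax : ℝ)
    (hlmax : IsGreatest
      {μ : ℝ | Module.End.HasEigenvalue ((B.comp (Qinv.comp Badj)).toLinearMap) μ} lmax)
    (hlam2 : lam ≤ 1 / lmax)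
    (prox : EuclideanSpace ℝ (Fin M) → EuclideanSpace ℝ (Fin M))
    (hprox : ∀ w p, prox w = p ↔
      ∀ z : EuclideanSpace ℝ (Fin M),
        (1 / lam) * f₁ p + (1 / 2) * ‖p - w‖ ^ 2 ≤ (1 / lam) * f₁ z + (1 / 2) * ‖z - w‖ ^ 2)
    (T1 : EuclideanSpace ℝ (Fin M) → EuclideanSpace ℝ (Fin N) → EuclideanSpace ℝ (Fin M))
    (hT1 : ∀ v u, T1 v u =
      (B (u - Qinv (gradf₂ u)) + (v - lam • B (Qinv (Badj v))))
        - prox (B (u - Qinv (gradf₂ u)) + (v - lam • B (Qinv (Badj v)))))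
    (T2 : EuclideanSpace ℝ (Fin M) → EuclideanSpace ℝ (Fin N) → EuclideanSpace ℝ (Fin N))
    (hT2 : ∀ v u, T2 v u = u - Qinv (gradf₂ u) - lam • Qinv (Badj (T1 v u)))
    (hQnorm : ‖Qinv‖ ≤ 2 * β)
    (v₁ v₂ : EuclideanSpace ℝ (Fin M)) (u₁ u₂ : EuclideanSpace ℝ (Fin N)) :
    Real.sqrt (⟪T2 v₁ u₁ - T2 v₂ u₂, Q (T2 v₁ u₁ - T2 v₂ u₂)⟫
        + lam * ‖T1 v₁ u₁ - T1 v₂ u₂‖ ^ 2)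
      ≤ Real.sqrt (⟪u₁ - u₂, Q (u₁ - u₂)⟫ + lam * ‖v₁ - v₂‖ ^ 2) := by
  have hQ : ∀ x, 0 ≤ ⟪x, Q x⟫ := fun x => by
    rcases eq_or_ne x 0 with rfl | hx
    · simp
    · exact (hQpos x hx).le
  have hK :=
    mul_inner_comp_inv_adj_self_le hadj hQsymm hQinv₂ hlam (fun μ hμ => hlmax.2 hμ) hlam2
  have hP : ∀ w, IsProx f₁ (1 / lam) w (prox w) := fun w => (hprox w _).1 rfl
  have ht : ‖T1 v₁ u₁ - T1 v₂ u₂‖ ^ 2 ≤ ⟪T1 v₁ u₁ - T1 v₂ u₂,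
      B (u₁ - u₂ - Qinv (gradf₂ u₁ - gradf₂ u₂))
        + (v₁ - v₂ - lam • B (Qinv (Badj (v₁ - v₂))))⟫ := by
    rw [hT1 v₁ u₁, hT1 v₂ u₂]
    convert (hP _).norm_sub_sub_sq_le_inner hf₁ (by positivity) (hP _) using 2
    simp only [map_sub]
    module
  have hT2_sub : T2 v₁ u₁ - T2 v₂ u₂
      = u₁ - u₂ - Qinv (gradf₂ u₁ - gradf₂ u₂) - lam • Qinv (Badj (T1 v₁ u₁ - T1 v₂ u₂)) := by
    simp only [hT2, map_sub]
    module
  apply Real.sqrt_le_sqrt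
  calc _ ≤ ⟪u₁ - u₂ - Qinv (gradf₂ u₁ - gradf₂ u₂), Q (u₁ - u₂ - Qinv (gradf₂ u₁ - gradf₂ u₂))⟫
        + lam * ‖v₁ - v₂‖ ^ 2 := by
        rw [hT2_sub]
        exact inner_sub_smul_inv_adj_add_le hadj hQsymm hQinv₂ hQ hlam.le hK ht
    _ ≤ _ := by
        gcongr
        exact inner_sub_inv_apply_le hQsymm hQinv₂ hQnorm (hcoco u₁ u₂)

/-- If moreover `‖Q⁻¹‖₂ ≤ 2β`, the operator `T` is nonexpansive in the norm
`‖(v,u)‖_{λ,Q} = √(‖u‖²_Q + λ‖v‖²)`. -/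
theorem T_nonexpansive (N M : ℕ)
    (f₁ : EuclideanSpace ℝ (Fin M) → ℝ) (hf₁ : ConvexOn ℝ Set.univ f₁)
    (f₂ : EuclideanSpace ℝ (Fin N) → ℝ) (hf₂ : ConvexOn ℝ Set.univ f₂)
    (gradf₂ : EuclideanSpace ℝ (Fin N) → EuclideanSpace ℝ (Fin N))
    (hgrad : ∀ u, HasGradientAt f₂ (gradf₂ u) u)
    (B : EuclideanSpace ℝ (Fin N) →L[ℝ] EuclideanSpace ℝ (Fin M))
    (Badj : EuclideanSpace ℝ (Fin M) →L[ℝ] EuclideanSpace ℝ (Fin N))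
    (hadj : ∀ (x : EuclideanSpace ℝ (Fin N)) (y : EuclideanSpace ℝ (Fin M)),
      ⟪B x, y⟫ = ⟪x, Badj y⟫)
    (Q Qinv : EuclideanSpace ℝ (Fin N) →L[ℝ] EuclideanSpace ℝ (Fin N))
    (hQsymm : ∀ x y : EuclideanSpace ℝ (Fin N), ⟪Q x, y⟫ = ⟪x, Q y⟫)
    (hQpos : ∀ x : EuclideanSpace ℝ (Fin N), x ≠ 0 → 0 < ⟪x, Q x⟫)
    (hQinv₁ : ∀ x, Qinv (Q x) = x) (hQinv₂ : ∀ x, Q (Qinv x) = x)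
    (lam : ℝ) (hlam : 0 < lam)
    (β : ℝ) (hβ : 0 < β)
    (hcoco : ∀ v w : EuclideanSpace ℝ (Fin N),
      β * ‖gradf₂ v - gradf₂ w‖ ^ 2 ≤ ⟪gradf₂ v - gradf₂ w, v - w⟫)
    (lmax : ℝ)
    (hlmax : IsGreatest
      {μ : ℝ | Module.End.HasEigenvalue ((B.comp (Qinv.comp Badj)).toLinearMap) μ} lmax)
    (hlam2 : lam ≤ 1 / lmax)
    (prox : EuclideanSpace ℝ (Fin M) → EuclideanSpace ℝ (Fin M))
    (hprox : ∀ w p, prox w = p ↔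
      ∀ z : EuclideanSpace ℝ (Fin M),
        (1 / lam) * f₁ p + (1 / 2) * ‖p - w‖ ^ 2 ≤ (1 / lam) * f₁ z + (1 / 2) * ‖z - w‖ ^ 2)
    (T1 : EuclideanSpace ℝ (Fin M) → EuclideanSpace ℝ (Fin N) → EuclideanSpace ℝ (Fin M))
    (hT1 : ∀ v u, T1 v u =
      (B (u - Qinv (gradf₂ u)) + (v - lam • B (Qinv (Badj v))))
        - prox (B (u - Qinv (gradf₂ u)) + (v - lam • B (Qinv (Badj v)))))
    (T2 : EuclideanSpace ℝ (Fin M) → EuclideanSpace ℝ (Fin N) → EuclideanSpace ℝ (Fin N))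
    (hT2 : ∀ v u, T2 v u = u - Qinv (gradf₂ u) - lam • Qinv (Badj (T1 v u)))
    (hQnorm : ‖Qinv‖ ≤ 2 * β)
    (v₁ v₂ : EuclideanSpace ℝ (Fin M)) (u₁ u₂ : EuclideanSpace ℝ (Fin N)) :
    Real.sqrt (⟪T2 v₁ u₁ - T2 v₂ u₂, Q (T2 v₁ u₁ - T2 v₂ u₂)⟫
        + lam * ‖T1 v₁ u₁ - T1 v₂ u₂‖ ^ 2)
      ≤ Real.sqrt (⟪u₁ - u₂, Q (u₁ - u₂)⟫ + lam * ‖v₁ - v₂‖ ^ 2) :=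
  T_nonexpansive_general N M f₁ hf₁ gradf₂ B Badj hadj Q Qinv hQsymm hQpos hQinv₂ lam hlam β hcoco
    lmax hlmax hlam2 prox hprox T1 hT1 T2 hT2 hQnorm v₁ v₂ u₁ u₂
end
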